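/- Let F3 = ⟨α1, α2, α3⟩ be the free group on three generators and Π = α1α2α3. The quotient of F3 by the relations α1 = α3, α2 = α3α2α3⁻¹, α3 = Πα1Π⁻¹ is free abelian of rank 2. -/

import Mathlib

/-- The generators `α₁, α₂, α₃` of the free group `F₃`. -/
def α (i : Fin 3) : FreeGroup (Fin 3) := FreeGroup.of i

/-- `Π = α₁α₂α₃`. -/
def Pi3 : FreeGroup (Fin 3) := α 0 * α 1 * α 2

/-- The monodromy relations of a singular fiber of type `Ã₁*`:
`α₁ = α₃`, `α₂ = α₃α₂α₃⁻¹`, `α₃ = Πα₁Π⁻¹`. -/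
def rels : Set (FreeGroup (Fin 3)) :=
  {(α 0)⁻¹ * α 2, (α 1)⁻¹ * (α 2 * α 1 * (α 2)⁻¹), (α 2)⁻¹ * (Pi3 * α 0 * Pi3⁻¹)}


/-! Once `α₁ = α₃`, the second relation says that `α₁` and `α₂` commute; then `Π = α₁α₂α₁`
commutes with `α₁`, so the third relation is automatic. The quotient is therefore
`⟨α₁, α₂ | α₁α₂ = α₂α₁⟩ ≅ ℤ²`. -/

namespace A1star

open PresentedGroup

theorem forall_rels_lift_eq_one_iff {G : Type*} [Group G] (x : Fin 3 → G) :
    (∀ r ∈ rels, FreeGroup.lift x r = 1) ↔ x 0 = x 2 ∧ Commute (x 0) (x 1) := by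
  simp only [rels, Pi3, α, Set.mem_insert_iff, Set.mem_singleton_iff, forall_eq_or_imp,
    forall_eq, map_mul, map_inv, FreeGroup.lift_apply_of, inv_mul_eq_one]
  constructor
  · rintro ⟨h02, h1, -⟩
    rw [← h02] at h1
    exact ⟨h02, (eq_mul_inv_iff_mul_eq.mp h1).symm⟩
  · rintro ⟨h02, hcomm⟩
    rw [← h02]
    have hPi : Commute (x 0 * x 1 * x 0) (x 0) :=
      ((Commute.refl _).mul_left hcomm.symm).mul_left (.refl _)
    exact ⟨rfl, eq_mul_inv_iff_mul_eq.mpr hcomm.eq.symm, by rw [hPi.eq, mul_inv_cancel_right]⟩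

theorem of_zero_eq_of_two_and_commute :
    (of 0 : PresentedGroup rels) = of 2 ∧ Commute (of 0 : PresentedGroup rels) (of 1) := by
  refine (forall_rels_lift_eq_one_iff _).mp fun r hr => ?_
  have hlift : FreeGroup.lift (of (rels := rels)) = mk rels :=
    FreeGroup.ext_hom _ _ fun _ => by simp [of]
  rw [hlift, one_of_mem hr]

theorem commute_zpowersHom_of_zero_of_one (m n : Multiplicative ℤ) :
    Commute (zpowersHom (PresentedGroup rels) (of 0) m) (zpowersHom _ (of 1) n) :=
  of_zero_eq_of_two_and_commute.2.zpow_zpow _ _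

def toIntProd : PresentedGroup rels →* Multiplicative (ℤ × ℤ) :=
  toGroup (f := ![.ofAdd (1, 0), .ofAdd (0, 1), .ofAdd (1, 0)])
    ((forall_rels_lift_eq_one_iff _).mpr ⟨rfl, Commute.all _ _⟩)

def ofIntProd : Multiplicative (ℤ × ℤ) →* PresentedGroup rels :=
  (MonoidHom.noncommCoprod (zpowersHom _ (of 0)) (zpowersHom _ (of 1))
    commute_zpowersHom_of_zero_of_one).comp (MulEquiv.prodMultiplicative ℤ ℤ).toMonoidHom

theorem toIntProd_comp_ofIntProd : toIntProd.comp ofIntProd = .id _ := by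
  refine MonoidHom.ext fun p => Multiplicative.toAdd.injective ?_
  ext <;> simp [toIntProd, ofIntProd]

theorem ofIntProd_comp_toIntProd : ofIntProd.comp toIntProd = .id _ := by
  refine PresentedGroup.ext fun i => ?_
  fin_cases i <;> simp [toIntProd, ofIntProd]
  exact of_zero_eq_of_two_and_commute.1

end A1star

/-- The quotient of `F₃` by the monodromy relations of an `Ã₁*` fiber is
free abelian of rank two. -/
theorem stmt_10 :
    Nonempty ((FreeGroup (Fin 3) ⧸ Subgroup.normalClosure rels) ≃* Multiplicative (ℤ × ℤ)) :=
  ⟨A1star.toIntProd.toMulEquiv A1star.ofIntProd A1star.ofIntProd_comp_toIntProd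
    A1star.toIntProd_comp_ofIntProd⟩
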